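/- Consider a structured 3DM' instance with parameters n, q, m (n = qm), blocks W_k, coloring χ with τ colors, and maps f and g as defined in the context, and let α be any positive integer with the jobs defined in the context. If the instance admits a proper matching M, then there exist m pairwise disjoint sets of jobs whose union consists of all cover jobs, all dummy jobs, and exactly the match jobs of the matches in M, such that each of the m sets has total size exactly L = 6m³·∑_{i=1}^{12q+τ} α^i. -/

import Mathlib

/-- The elements of the 3DM' instance: `w_i`, `w̄_i`, `s_j`, `a_i`, `b_i`. -/
inductive Elem : Type
  | w (i : ℕ)
  | wbar (i : ℕ)
  | s (j : ℕ)
  | a (i : ℕ)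
  | b (i : ℕ)
  deriving DecidableEq

/-- `ζ(3k+1) = 3k+2`, `ζ(3k+2) = 3k+3`, `ζ(3k+3) = 3k+1`. -/
def zeta (i : ℕ) : ℕ :=
  if i % 3 = 1 then i + 1 else if i % 3 = 2 then i + 1 else i - 2

/-- The one-element matches `{w_i}`, `{w̄_i}`. -/
def T1 (n : ℕ) : Finset (Finset Elem) :=
  (Finset.Icc 1 (3 * n)).image (fun i => {Elem.w i}) ∪
    (Finset.Icc 1 (3 * n)).image (fun i => {Elem.wbar i})

/-- The matches `{w_i, a_i, b_i}` and `{w̄_i, a_i, b_{ζ(i)}}`. -/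
def T3 (n : ℕ) : Finset (Finset Elem) :=
  (Finset.Icc 1 (3 * n)).image (fun i => {Elem.w i, Elem.a i, Elem.b i}) ∪
    (Finset.Icc 1 (3 * n)).image (fun i => {Elem.wbar i, Elem.a i, Elem.b (zeta i)})

/-- The ground set `W ∪ X ∪ Y`. -/
def allElems (n s : ℕ) : Finset Elem :=
  (Finset.Icc 1 (3 * n)).image Elem.w ∪ (Finset.Icc 1 (3 * n)).image Elem.wbar ∪
    (Finset.Icc 1 s).image Elem.s ∪ (Finset.Icc 1 (3 * n)).image Elem.a ∪
    (Finset.Icc 1 (3 * n)).image Elem.b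

/-- A proper matching: a subset of the matches in which every element of the
ground set appears exactly once. -/
def ProperMatching (n s : ℕ) (T2 M : Finset (Finset Elem)) : Prop :=
  M ⊆ T1 n ∪ T2 ∪ T3 n ∧ ∀ η ∈ allElems n s, (M.filter (fun e => η ∈ e)).card = 1

/-- Membership of an element in the block `W_k = {w_i, w̄_i : 3kq < i ≤ 3kq + 3q}`. -/
def inBlock (q k : ℕ) (η : Elem) : Prop :=
  ∃ i, 3 * k * q < i ∧ i ≤ 3 * k * q + 3 * q ∧ (η = Elem.w i ∨ η = Elem.wbar i)

/-- The bit-allocation map `f`. -/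
def fmap (q : ℕ) (χ : ℕ → ℕ) : Elem → ℕ
  | .b i => (i - 1) % (3 * q) + 1
  | .a i => 3 * q + ((i - 1) % (3 * q) + 1)
  | .w i => 6 * q + ((i - 1) % (3 * q) + 1)
  | .wbar i => 9 * q + ((i - 1) % (3 * q) + 1)
  | .s j => 12 * q + χ j

/-- The coefficient map `g`: elements of block `k` get `m + k`, and
`s_j` gets `m + l − 1` where `j` is the `l`-th index of its color
(`rk j = l` for the fixed enumeration `rk`). -/
def gmap (q m : ℕ) (rk : ℕ → ℕ) : Elem → ℕ
  | .b i => m + (i - 1) / (3 * q)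
  | .a i => m + (i - 1) / (3 * q)
  | .w i => m + (i - 1) / (3 * q)
  | .wbar i => m + (i - 1) / (3 * q)
  | .s j => m + rk j - 1

/-- The size of the `t`-th color class of `χ`. -/
def classCard (s : ℕ) (χ : ℕ → ℕ) (t : ℕ) : ℕ :=
  ((Finset.Icc 1 s).filter (fun j => χ j = t)).card

/-- The jobs of the reduction: one match job per match, one cover job per
element, and dummy jobs indexed by a color and a counter. -/
inductive Job : Type
  | mtch (e : Finset Elem)
  | cover (η : Elem)
  | dummy (t : ℕ) (idx : ℕ)
  deriving DecidableEq

/-- Job sizes: a match job has size `∑_{η ∈ e} g(η)·α^{f(η)}`, a cover job has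
size `(6m³ − g(η))·α^{f(η)}`, and a dummy job of color `t` has size
`6m³·α^{12q+t}`. -/
def jobSize (α q m : ℕ) (χ rk : ℕ → ℕ) : Job → ℕ
  | .mtch e => ∑ η ∈ e, gmap q m rk η * α ^ fmap q χ η
  | .cover η => (6 * m ^ 3 - gmap q m rk η) * α ^ fmap q χ η
  | .dummy t _ => 6 * m ^ 3 * α ^ (12 * q + t)

/-- The cover jobs: one for every element of the ground set. -/
def coverJobs (n s : ℕ) : Finset Job := (allElems n s).image Job.cover

/-- The dummy jobs: `m − l_t` jobs for each color `t ∈ {1,…,τ}`. -/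
def dummyJobs (s τ m : ℕ) (χ : ℕ → ℕ) : Finset Job :=
  (Finset.Icc 1 τ).biUnion
    (fun t => (Finset.range (m - classCard s χ t)).image (Job.dummy t))


/-!
Every match of `M` lies inside a single block `W_k` (an `s_j` is only ever matched with some
`w_i` or `w̄_i`), and machine `k` receives the match jobs of the matches inside `W_k` together
with the cover jobs of their elements. As the matches of `M` partition the ground set, the match
and cover jobs on machine `k` add up to `6m³ · ∑ α^{f(η)}` over the elements `η` covered there:
the `12q` elements `w_i, w̄_i, a_i, b_i` of `W_k`, whose values of `f` run through `1, …, 12q`,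
and some `s_j`, which carry pairwise distinct colors by the coloring condition and contribute
`α^{12q + χ(j)}`. A color `t` thus occurs on exactly `l_t` machines, and its `m − l_t` dummy
jobs go one each to the other machines, completing the powers `α^{12q+1}, …, α^{12q+τ}`.
-/

open Finset

section Sums

variable {β : Type*} [AddCommMonoid β]

theorem sum_Icc_one_add (f : ℕ → β) (a b : ℕ) :
    ∑ i ∈ Icc 1 (a + b), f i = ∑ i ∈ Icc 1 a, f i + ∑ i ∈ Icc 1 b, f (a + i) := by
  induction b with
  | zero => simp
  | succ b ih =>
    rw [← add_assoc, sum_Icc_succ_top (by omega), ih, sum_Icc_succ_top (by omega), add_assoc]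
    rfl

theorem sum_sum_eq_sum_of_card_filter_mem_eq_one {α : Type*} [DecidableEq α]
    {P : Finset (Finset α)} {U : Finset α} (hsub : ∀ e ∈ P, e ⊆ U)
    (hcover : ∀ x ∈ U, #(P.filter (x ∈ ·)) = 1) (f : α → β) :
    ∑ e ∈ P, ∑ x ∈ e, f x = ∑ x ∈ U, f x := by
  rw [sum_comm' (t' := U) (s' := fun x => P.filter (x ∈ ·))]
  · exact sum_congr rfl fun x hx => by rw [sum_const, hcover x hx, one_smul]
  · intro e x
    simp only [mem_filter]
    exact ⟨fun ⟨he, hx⟩ => ⟨⟨he, hx⟩, hsub e he hx⟩, fun ⟨h, _⟩ => h⟩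

theorem card_toFinset_ofPred_mem (A : Finset ℕ) (hA : (Set.ofPred (· ∈ A)).Finite) :
    #hA.toFinset = #A := by
  congr 1
  ext
  simp [Set.ofPred]

theorem injOn_nth_mem (A : Finset ℕ) : Set.InjOn (Nat.nth (· ∈ A)) (range #A) := by
  have hA : (Set.ofPred (· ∈ A)).Finite := A.finite_toSet
  intro i hi j hj
  rw [coe_range, ← card_toFinset_ofPred_mem A hA] at hi hj
  exact Nat.nth_injOn hA hi hj

theorem image_nth_mem_range_card (A : Finset ℕ) : (range #A).image (Nat.nth (· ∈ A)) = A := by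
  have hA : (Set.ofPred (· ∈ A)).Finite := A.finite_toSet
  have himage := Nat.image_nth_Iio_card hA
  rw [card_toFinset_ofPred_mem A hA] at himage
  apply coe_injective
  simp only [coe_image, coe_range, himage]
  rfl

theorem sum_range_card_nth_mem (A : Finset ℕ) (f : ℕ → β) :
    ∑ i ∈ range #A, f (Nat.nth (· ∈ A) i) = ∑ a ∈ A, f a := by
  rw [← sum_image (injOn_nth_mem A), image_nth_mem_range_card]

theorem sum_ite_div_eq {c m k : ℕ} (hc : 0 < c) (hk : k < m) (f : ℕ → β) :
    ∑ i ∈ Icc 1 (c * m), (if (i - 1) / c = k then f ((i - 1) % c + 1) else 0) =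
      ∑ p ∈ Icc 1 c, f p := by
  have hkm : c * k + c ≤ c * m := by nlinarith
  have hfilter : (Icc 1 (c * m)).filter (fun i => (i - 1) / c = k) =
      (Icc 1 c).map (addLeftEmbedding (c * k)) := by
    ext i
    simp only [mem_filter, mem_Icc, mem_map, addLeftEmbedding_apply, Nat.div_eq_iff hc]
    rw [mul_comm k c]
    constructor
    · rintro ⟨_, h⟩
      exact ⟨i - c * k, by omega, by omega⟩
    · rintro ⟨p, hp, rfl⟩
      omega
  rw [← sum_filter, hfilter, sum_map]
  refine sum_congr rfl fun p hp => ?_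
  rw [mem_Icc] at hp
  rw [addLeftEmbedding_apply, show c * k + p - 1 = p - 1 + c * k by omega,
    Nat.add_mul_mod_self_left, Nat.mod_eq_of_lt (by omega), Nat.sub_add_cancel hp.1]

end Sums

def IsT2Shaped (n s : ℕ) (T2 : Finset (Finset Elem)) : Prop :=
  ∀ e ∈ T2, ∃ i ∈ Icc 1 (3 * n), ∃ j ∈ Icc 1 s,
    e = {Elem.w i, Elem.s j} ∨ e = {Elem.wbar i, Elem.s j}

def IsBlockColoring (q m s : ℕ) (T2 : Finset (Finset Elem)) (χ : ℕ → ℕ) : Prop :=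
  ∀ j ∈ Icc 1 s, ∀ j' ∈ Icc 1 s, j ≠ j' → ∀ k < m,
    (∃ e ∈ T2, Elem.s j ∈ e ∧ ∃ η ∈ e, inBlock q k η) →
    (∃ e ∈ T2, Elem.s j' ∈ e ∧ ∃ η ∈ e, inBlock q k η) → χ j ≠ χ j'

-- `s_j` belongs to no block; its value `0` is harmless in the supremum `matchBlock`.
def elemBlock (q : ℕ) : Elem → ℕ
  | .w i | .wbar i | .a i | .b i => (i - 1) / (3 * q)
  | .s _ => 0

def matchBlock (q : ℕ) (e : Finset Elem) : ℕ := e.sup (elemBlock q)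

-- A proper matching has exactly one match through `s_j`; the supremum reads off its block.
def sMachine (q : ℕ) (M : Finset (Finset Elem)) (j : ℕ) : ℕ :=
  (M.filter (Elem.s j ∈ ·)).sup (matchBlock q)

def elemMachine (q : ℕ) (M : Finset (Finset Elem)) : Elem → ℕ
  | .w i | .wbar i | .a i | .b i => (i - 1) / (3 * q)
  | .s j => sMachine q M j

def missingMachines (q m s : ℕ) (M : Finset (Finset Elem)) (χ : ℕ → ℕ) (t : ℕ) : Finset ℕ :=
  range m \ ((Icc 1 s).filter (χ · = t)).image (sMachine q M)

noncomputable def jobMachine (q m s : ℕ) (M : Finset (Finset Elem)) (χ : ℕ → ℕ) : Job → ℕ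
  | .mtch e => matchBlock q e
  | .cover η => elemMachine q M η
  | .dummy t idx => Nat.nth (· ∈ missingMachines q m s M χ t) idx

section Blocks

variable {n q m s : ℕ}

theorem div_lt_of_mem_Icc (hq : 1 ≤ q) (hqm : n = q * m) {i : ℕ} (hi : i ∈ Icc 1 (3 * n)) :
    (i - 1) / (3 * q) < m := by
  rw [mem_Icc] at hi
  rw [Nat.div_lt_iff_lt_mul (by omega)]
  calc i - 1 < 3 * n := by omega
    _ = m * (3 * q) := by rw [hqm]; ring

theorem inBlock_div (hq : 1 ≤ q) {i : ℕ} (hi : 1 ≤ i) {η : Elem}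
    (hη : η = Elem.w i ∨ η = Elem.wbar i) : inBlock q ((i - 1) / (3 * q)) η := by
  have hdiv := Nat.div_add_mod (i - 1) (3 * q)
  have hmod := Nat.mod_lt (i - 1) (show 0 < 3 * q by omega)
  refine ⟨i, ?_, ?_, hη⟩ <;>
  · rw [show 3 * ((i - 1) / (3 * q)) * q = 3 * q * ((i - 1) / (3 * q)) by ring]
    omega

-- `ζ` permutes each triple `{3k+1, 3k+2, 3k+3}`, and triples do not straddle blocks.
theorem zeta_sub_one_div (q i : ℕ) : (zeta i - 1) / (3 * q) = (i - 1) / (3 * q) := by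
  have h : (zeta i - 1) / 3 = (i - 1) / 3 := by unfold zeta; split_ifs <;> omega
  rw [← Nat.div_div_eq_div_mul, h, Nat.div_div_eq_div_mul]

theorem zeta_mem_Icc {i : ℕ} (hi : i ∈ Icc 1 (3 * n)) : zeta i ∈ Icc 1 (3 * n) := by
  simp only [mem_Icc] at *
  unfold zeta
  split_ifs <;> omega

end Blocks

section Matching

variable {n q m s : ℕ} {T2 M : Finset (Finset Elem)} {e : Finset Elem}

theorem exists_index_matchBlock (hT2 : IsT2Shaped n s T2) (he : e ∈ T1 n ∪ T2 ∪ T3 n) :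
    ∃ i ∈ Icc 1 (3 * n), (Elem.w i ∈ e ∨ Elem.wbar i ∈ e) ∧
      matchBlock q e = (i - 1) / (3 * q) ∧
      ∀ η ∈ e, (∃ j, η = Elem.s j) ∨ elemBlock q η = matchBlock q e := by
  suffices h : ∃ i ∈ Icc 1 (3 * n), (Elem.w i ∈ e ∨ Elem.wbar i ∈ e) ∧
      ∀ η ∈ e, (∃ j, η = Elem.s j) ∨ elemBlock q η = (i - 1) / (3 * q) by
    obtain ⟨i, hi, hwi, hblock⟩ := h
    have hsup : matchBlock q e = (i - 1) / (3 * q) := by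
      refine le_antisymm (Finset.sup_le fun η hη => ?_) ?_
      · rcases hblock η hη with ⟨j, rfl⟩ | h
        exacts [Nat.zero_le _, h.le]
      · rcases hwi with hwi | hwi
        exacts [le_sup (f := elemBlock q) hwi, le_sup (f := elemBlock q) hwi]
    exact ⟨i, hi, hwi, hsup, hsup ▸ hblock⟩
  simp only [T1, T3, mem_union, mem_image] at he
  rcases he with ((⟨i, hi, rfl⟩ | ⟨i, hi, rfl⟩) | he) | ⟨i, hi, rfl⟩ | ⟨i, hi, rfl⟩
  · exact ⟨i, hi, by simp, by simp [elemBlock]⟩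
  · exact ⟨i, hi, by simp, by simp [elemBlock]⟩
  · obtain ⟨i, hi, j, -, rfl | rfl⟩ := hT2 e he
    · exact ⟨i, hi, by simp, by simp [elemBlock]⟩
    · exact ⟨i, hi, by simp, by simp [elemBlock]⟩
  · exact ⟨i, hi, by simp, by simp [elemBlock]⟩
  · exact ⟨i, hi, by simp, by simp [elemBlock, zeta_sub_one_div]⟩

theorem matchBlock_lt (hq : 1 ≤ q) (hqm : n = q * m) (hT2 : IsT2Shaped n s T2)
    (he : e ∈ T1 n ∪ T2 ∪ T3 n) : matchBlock q e < m := by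
  obtain ⟨i, hi, -, hblock, -⟩ := exists_index_matchBlock (q := q) hT2 he
  exact hblock ▸ div_lt_of_mem_Icc hq hqm hi

theorem mem_T2_of_s_mem (he : e ∈ T1 n ∪ T2 ∪ T3 n) {j : ℕ} (hs : Elem.s j ∈ e) : e ∈ T2 := by
  simp only [T1, T3, mem_union, mem_image] at he
  rcases he with ((⟨i, -, rfl⟩ | ⟨i, -, rfl⟩) | he) | ⟨i, -, rfl⟩ | ⟨i, -, rfl⟩
  all_goals first | exact he | simp at hs

theorem subset_allElems (hT2 : IsT2Shaped n s T2) (he : e ∈ T1 n ∪ T2 ∪ T3 n) :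
    e ⊆ allElems n s := by
  simp only [T1, T3, mem_union, mem_image] at he
  rcases he with ((⟨i, hi, rfl⟩ | ⟨i, hi, rfl⟩) | he) | ⟨i, hi, rfl⟩ | ⟨i, hi, rfl⟩
  · simp_all [allElems]
  · simp_all [allElems]
  · obtain ⟨i, hi, j, hj, rfl | rfl⟩ := hT2 e he <;> simp_all [allElems, insert_subset_iff]
  · simp_all [allElems, insert_subset_iff]
  · have := zeta_mem_Icc hi
    simp_all [allElems, insert_subset_iff]

theorem filter_mem_eq_singleton (hT2 : IsT2Shaped n s T2) (hM : ProperMatching n s T2 M)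
    (he : e ∈ M) {η : Elem} (hη : η ∈ e) : M.filter (η ∈ ·) = {e} := by
  obtain ⟨e', he'⟩ := card_eq_one.1 (hM.2 η (subset_allElems hT2 (hM.1 he) hη))
  have : e ∈ M.filter (η ∈ ·) := mem_filter.2 ⟨he, hη⟩
  rw [he', mem_singleton] at this
  rw [he', this]

theorem elemMachine_eq_matchBlock (hT2 : IsT2Shaped n s T2) (hM : ProperMatching n s T2 M)
    (he : e ∈ M) {η : Elem} (hη : η ∈ e) : elemMachine q M η = matchBlock q e := by
  obtain ⟨-, -, -, -, hblock⟩ := exists_index_matchBlock (q := q) hT2 (hM.1 he)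
  cases η with
  | s j => rw [elemMachine, sMachine, filter_mem_eq_singleton hT2 hM he hη, sup_singleton]
  | w i | wbar i | a i | b i => exact (hblock _ hη).resolve_left (by simp)

theorem sMachine_spec (hq : 1 ≤ q) (hqm : n = q * m) (hT2 : IsT2Shaped n s T2)
    (hM : ProperMatching n s T2 M) {j : ℕ} (hj : j ∈ Icc 1 s) :
    sMachine q M j < m ∧ ∃ e ∈ T2, Elem.s j ∈ e ∧ ∃ η ∈ e, inBlock q (sMachine q M j) η := by
  obtain ⟨e, hfilter⟩ := card_eq_one.1 (hM.2 (Elem.s j) (by simp_all [allElems]))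
  obtain ⟨heM, hse⟩ := mem_filter.1 (hfilter ▸ mem_singleton_self e)
  have hmachine : sMachine q M j = matchBlock q e := by rw [sMachine, hfilter, sup_singleton]
  obtain ⟨i, hi, hwi, hblock, -⟩ := exists_index_matchBlock (q := q) hT2 (hM.1 heM)
  refine ⟨hmachine ▸ matchBlock_lt hq hqm hT2 (hM.1 heM), e, mem_T2_of_s_mem (hM.1 heM) hse,
    hse, ?_⟩
  have hi1 : 1 ≤ i := (mem_Icc.1 hi).1
  rw [hmachine, hblock]
  rcases hwi with hwi | hwi
  exacts [⟨_, hwi, inBlock_div hq hi1 (Or.inl rfl)⟩, ⟨_, hwi, inBlock_div hq hi1 (Or.inr rfl)⟩]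

theorem color_ne_of_sMachine_eq {χ : ℕ → ℕ} (hq : 1 ≤ q) (hqm : n = q * m)
    (hT2 : IsT2Shaped n s T2) (hM : ProperMatching n s T2 M) (hχ : IsBlockColoring q m s T2 χ)
    {j j' : ℕ} (hj : j ∈ Icc 1 s) (hj' : j' ∈ Icc 1 s) (hne : j ≠ j')
    (heq : sMachine q M j = sMachine q M j') : χ j ≠ χ j' := by
  obtain ⟨hlt, hblock⟩ := sMachine_spec hq hqm hT2 hM hj
  exact hχ j hj j' hj' hne _ hlt hblock (heq ▸ (sMachine_spec hq hqm hT2 hM hj').2)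

end Matching

section Schedule

variable {n q m s τ : ℕ} {T2 M : Finset (Finset Elem)} {χ : ℕ → ℕ}

theorem card_missingMachines (hq : 1 ≤ q) (hqm : n = q * m) (hT2 : IsT2Shaped n s T2)
    (hM : ProperMatching n s T2 M) (hχ : IsBlockColoring q m s T2 χ) (t : ℕ) :
    #(missingMachines q m s M χ t) = m - classCard s χ t := by
  rw [missingMachines, card_sdiff_of_subset, card_range, card_image_of_injOn, classCard]
  · intro j hj j' hj' heq
    simp only [coe_filter, Set.mem_ofPred_eq] at hj hj'
    by_contra hne
    exact color_ne_of_sMachine_eq hq hqm hT2 hM hχ hj.1 hj'.1 hne heq (hj.2.trans hj'.2.symm)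
  · intro k hk
    obtain ⟨j, hj, rfl⟩ := mem_image.1 hk
    exact mem_range.2 (sMachine_spec hq hqm hT2 hM (mem_filter.1 hj).1).1

theorem elemMachine_lt (hq : 1 ≤ q) (hqm : n = q * m) (hT2 : IsT2Shaped n s T2)
    (hM : ProperMatching n s T2 M) {η : Elem} (hη : η ∈ allElems n s) :
    elemMachine q M η < m := by
  cases η with
  | s j => exact (sMachine_spec hq hqm hT2 hM (by simpa [allElems] using hη)).1
  | w i | wbar i | a i | b i => exact div_lt_of_mem_Icc hq hqm (by simpa [allElems] using hη)

theorem jobMachine_lt (hq : 1 ≤ q) (hqm : n = q * m) (hT2 : IsT2Shaped n s T2)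
    (hM : ProperMatching n s T2 M) (hχ : IsBlockColoring q m s T2 χ) {job : Job}
    (hjob : job ∈ coverJobs n s ∪ dummyJobs s τ m χ ∪ M.image Job.mtch) :
    jobMachine q m s M χ job < m := by
  simp only [coverJobs, dummyJobs, mem_union, mem_image, mem_biUnion] at hjob
  rcases hjob with (⟨η, hη, rfl⟩ | ⟨t, -, idx, hidx, rfl⟩) | ⟨e, he, rfl⟩
  · exact elemMachine_lt hq hqm hT2 hM hη
  · rw [← card_missingMachines hq hqm hT2 hM hχ] at hidx
    have hmem := image_nth_mem_range_card (missingMachines q m s M χ t) ▸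
      mem_image_of_mem (Nat.nth (· ∈ missingMachines q m s M χ t)) hidx
    exact mem_range.1 (mem_sdiff.1 hmem).1
  · exact matchBlock_lt hq hqm hT2 (hM.1 he)

theorem gmap_le {rk : ℕ → ℕ} (hq : 1 ≤ q) (hqm : n = q * m) (hrk : ∀ j ∈ Icc 1 s, rk j ≤ m)
    {η : Elem} (hη : η ∈ allElems n s) : gmap q m rk η ≤ 6 * m ^ 3 := by
  have hm : m ≤ m ^ 3 := Nat.le_self_pow (by norm_num) m
  cases η with
  | s j => have := hrk j (by simpa [allElems] using hη); simp only [gmap]; omega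
  | w i | wbar i | a i | b i =>
    have := div_lt_of_mem_Icc hq hqm (by simpa [allElems] using hη)
    simp only [gmap]
    omega

variable {β : Type*} [AddCommMonoid β]

theorem sum_allElems (f : Elem → β) :
    ∑ η ∈ allElems n s, f η = ∑ i ∈ Icc 1 (3 * n),
      (f (Elem.w i) + f (Elem.wbar i) + f (Elem.a i) + f (Elem.b i)) +
        ∑ j ∈ Icc 1 s, f (Elem.s j) := by
  rw [allElems, sum_union, sum_union, sum_union, sum_union]
  · simp only [sum_image fun _ _ _ _ h => Elem.w.inj h, sum_image fun _ _ _ _ h => Elem.wbar.inj h,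
      sum_image fun _ _ _ _ h => Elem.s.inj h, sum_image fun _ _ _ _ h => Elem.a.inj h,
      sum_image fun _ _ _ _ h => Elem.b.inj h, sum_add_distrib]
    abel
  all_goals simp only [disjoint_left, mem_union, mem_image]; aesop

theorem sum_jobs (f : Job → β) :
    ∑ job ∈ coverJobs n s ∪ dummyJobs s τ m χ ∪ M.image Job.mtch, f job =
      ∑ η ∈ allElems n s, f (Job.cover η) +
        ∑ t ∈ Icc 1 τ, ∑ idx ∈ range (m - classCard s χ t), f (Job.dummy t idx) +
          ∑ e ∈ M, f (Job.mtch e) := by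
  have hcover : Disjoint (coverJobs n s) (dummyJobs s τ m χ) := by
    simp [coverJobs, dummyJobs, disjoint_left]
  have hmatch : Disjoint (coverJobs n s ∪ dummyJobs s τ m χ) (M.image Job.mtch) := by
    simp only [coverJobs, dummyJobs, disjoint_right, mem_image]
    rintro _ ⟨e, -, rfl⟩
    simp
  have hdummy : (Icc 1 τ : Set ℕ).PairwiseDisjoint
      fun t => (range (m - classCard s χ t)).image (Job.dummy t) := by
    intro t _ t' _ hne
    simp only [Function.onFun, disjoint_left, mem_image]
    rintro _ ⟨_, _, rfl⟩ ⟨_, _, h⟩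
    exact hne (Job.dummy.inj h).1.symm
  rw [sum_union hmatch, sum_union hcover, coverJobs, dummyJobs, sum_biUnion hdummy,
    sum_image fun _ _ _ _ h => Job.cover.inj h, sum_image fun _ _ _ _ h => Job.mtch.inj h]
  congr 2
  exact sum_congr rfl fun t _ => sum_image fun _ _ _ _ h => (Job.dummy.inj h).2

end Schedule

section Load

variable {n q m s τ : ℕ} {T2 M : Finset (Finset Elem)} {χ : ℕ → ℕ} {β : Type*} [AddCommMonoid β]

theorem sum_matches_on_machine (hT2 : IsT2Shaped n s T2) (hM : ProperMatching n s T2 M)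
    (k : ℕ) (f : Elem → β) :
    ∑ e ∈ M, (if matchBlock q e = k then ∑ η ∈ e, f η else 0) =
      ∑ η ∈ allElems n s, if elemMachine q M η = k then f η else 0 := by
  rw [← sum_sum_eq_sum_of_card_filter_mem_eq_one (fun e he => subset_allElems hT2 (hM.1 he)) hM.2]
  refine sum_congr rfl fun e he => ?_
  symm
  rw [sum_congr rfl fun η hη => by rw [elemMachine_eq_matchBlock hT2 hM he hη], sum_ite_irrel,
    sum_const_zero]

theorem sum_elems_on_machine (hq : 1 ≤ q) (hqm : n = q * m) {k : ℕ} (hk : k < m)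
    (f : ℕ → β) :
    ∑ η ∈ allElems n s, (if elemMachine q M η = k then f (fmap q χ η) else 0) =
      ∑ i ∈ Icc 1 (12 * q), f i +
        ∑ j ∈ Icc 1 s, if sMachine q M j = k then f (12 * q + χ j) else 0 := by
  rw [sum_allElems]
  congr 1
  calc _ = ∑ i ∈ Icc 1 (3 * q * m), if (i - 1) / (3 * q) = k then
          f (6 * q + ((i - 1) % (3 * q) + 1)) + f (9 * q + ((i - 1) % (3 * q) + 1)) +
            f (3 * q + ((i - 1) % (3 * q) + 1)) + f ((i - 1) % (3 * q) + 1) else 0 := by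
        rw [show 3 * n = 3 * q * m by rw [hqm]; ring]
        refine sum_congr rfl fun i _ => ?_
        by_cases h : (i - 1) / (3 * q) = k <;> simp [elemMachine, fmap, h]
    _ = ∑ p ∈ Icc 1 (3 * q), (f (6 * q + p) + f (9 * q + p) + f (3 * q + p) + f p) :=
        sum_ite_div_eq (by omega) hk fun p => f (6 * q + p) + f (9 * q + p) + f (3 * q + p) + f p
    _ = ∑ i ∈ Icc 1 (12 * q), f i := by
        rw [show 12 * q = 3 * q + 3 * q + 3 * q + 3 * q by ring, sum_Icc_one_add, sum_Icc_one_add,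
          sum_Icc_one_add, show 3 * q + 3 * q = 6 * q by ring, show 6 * q + 3 * q = 9 * q by ring]
        simp only [sum_add_distrib]
        abel

theorem sum_dummies_on_machine (hq : 1 ≤ q) (hqm : n = q * m) (hT2 : IsT2Shaped n s T2)
    (hM : ProperMatching n s T2 M) (hχ : IsBlockColoring q m s T2 χ) (k : ℕ) (f : ℕ → β) :
    ∑ t ∈ Icc 1 τ, ∑ idx ∈ range (m - classCard s χ t),
        (if Nat.nth (· ∈ missingMachines q m s M χ t) idx = k then f t else 0) =
      ∑ t ∈ Icc 1 τ, if k ∈ missingMachines q m s M χ t then f t else 0 := by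
  refine sum_congr rfl fun t _ => ?_
  rw [← card_missingMachines hq hqm hT2 hM hχ,
    sum_range_card_nth_mem _ fun a => if a = k then f t else 0, sum_ite_eq']

theorem sum_colors_on_machine (hq : 1 ≤ q) (hqm : n = q * m) (hT2 : IsT2Shaped n s T2)
    (hM : ProperMatching n s T2 M) (hχ : IsBlockColoring q m s T2 χ)
    (hχrange : ∀ j ∈ Icc 1 s, χ j ∈ Icc 1 τ) {k : ℕ} (hk : k < m) (f : ℕ → β) :
    ∑ j ∈ Icc 1 s, (if sMachine q M j = k then f (χ j) else 0) +
        ∑ t ∈ Icc 1 τ, (if k ∈ missingMachines q m s M χ t then f t else 0) =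
      ∑ t ∈ Icc 1 τ, f t := by
  set S := (Icc 1 s).filter (sMachine q M · = k)
  have hinj : Set.InjOn χ S := by
    intro j hj j' hj' heq
    simp only [S, coe_filter, Set.mem_ofPred_eq] at hj hj'
    by_contra hne
    exact color_ne_of_sMachine_eq hq hqm hT2 hM hχ hj.1 hj'.1 hne (hj.2.trans hj'.2.symm) heq
  have hmissing : (Icc 1 τ).filter (k ∈ missingMachines q m s M χ ·) = Icc 1 τ \ S.image χ := by
    ext t
    simp only [S, missingMachines, mem_filter, mem_sdiff, mem_range, mem_image, hk, true_and]
    aesop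
  rw [← sum_filter, ← sum_filter, ← sum_image hinj, hmissing, add_comm]
  exact sum_sdiff fun t ht => by
    obtain ⟨j, hj, rfl⟩ := mem_image.1 ht
    exact hχrange j (mem_filter.1 hj).1

end Load

theorem sum_jobSize_on_machine {n q m s τ α : ℕ} {T2 M : Finset (Finset Elem)} {χ rk : ℕ → ℕ}
    (hq : 1 ≤ q) (hqm : n = q * m) (hT2 : IsT2Shaped n s T2) (hM : ProperMatching n s T2 M)
    (hχ : IsBlockColoring q m s T2 χ) (hχrange : ∀ j ∈ Icc 1 s, χ j ∈ Icc 1 τ)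
    (hrk : ∀ j ∈ Icc 1 s, rk j ≤ m) {k : ℕ} (hk : k < m) :
    ∑ job ∈ (coverJobs n s ∪ dummyJobs s τ m χ ∪ M.image Job.mtch).filter
        (jobMachine q m s M χ · = k), jobSize α q m χ rk job =
      6 * m ^ 3 * ∑ i ∈ Icc 1 (12 * q + τ), α ^ i := by
  set L : ℕ → ℕ := fun i => 6 * m ^ 3 * α ^ i
  have hcover : ∀ η ∈ allElems n s,
      (if elemMachine q M η = k then (6 * m ^ 3 - gmap q m rk η) * α ^ fmap q χ η else 0) +
        (if elemMachine q M η = k then gmap q m rk η * α ^ fmap q χ η else 0) =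
      if elemMachine q M η = k then L (fmap q χ η) else 0 := fun η hη => by
    rw [← ite_add_zero, ← add_mul, Nat.sub_add_cancel (gmap_le hq hqm hrk hη)]
  rw [sum_filter, sum_jobs]
  show (∑ η ∈ allElems n s,
        if elemMachine q M η = k then (6 * m ^ 3 - gmap q m rk η) * α ^ fmap q χ η else 0) +
      (∑ t ∈ Icc 1 τ, ∑ idx ∈ range _,
        if Nat.nth (· ∈ missingMachines q m s M χ t) idx = k then L (12 * q + t) else 0) +
      (∑ e ∈ M, if matchBlock q e = k then ∑ η ∈ e, gmap q m rk η * α ^ fmap q χ η else 0) = _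
  rw [sum_matches_on_machine hT2 hM, add_right_comm, ← sum_add_distrib, sum_congr rfl hcover,
    sum_elems_on_machine hq hqm hk, sum_dummies_on_machine hq hqm hT2 hM hχ k
      fun t => L (12 * q + t), add_assoc,
    sum_colors_on_machine hq hqm hT2 hM hχ hχrange hk fun t => L (12 * q + t),
    ← sum_Icc_one_add, mul_sum]

theorem matching_to_schedule_general (n q m s τ α : ℕ)
    (hq : 1 ≤ q) (hqm : n = q * m)
    (T2 : Finset (Finset Elem))
    (hT2form : ∀ e ∈ T2, ∃ i ∈ Finset.Icc 1 (3 * n), ∃ j ∈ Finset.Icc 1 s,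
      e = {Elem.w i, Elem.s j} ∨ e = {Elem.wbar i, Elem.s j})
    (χ : ℕ → ℕ)
    (hχrange : ∀ j ∈ Finset.Icc 1 s, χ j ∈ Finset.Icc 1 τ)
    (hχ : ∀ j ∈ Finset.Icc 1 s, ∀ j' ∈ Finset.Icc 1 s, j ≠ j' → ∀ k < m,
      (∃ e ∈ T2, Elem.s j ∈ e ∧ ∃ η ∈ e, inBlock q k η) →
      (∃ e ∈ T2, Elem.s j' ∈ e ∧ ∃ η ∈ e, inBlock q k η) → χ j ≠ χ j')
    (hclass : ∀ t, classCard s χ t ≤ m)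
    (rk : ℕ → ℕ)
    (hrk : ∀ t ∈ Finset.Icc 1 τ,
      Set.BijOn rk {j | j ∈ Finset.Icc 1 s ∧ χ j = t} (Set.Icc 1 (classCard s χ t)))
    (M : Finset (Finset Elem)) (hM : ProperMatching n s T2 M) :
    ∃ G : Fin m → Finset Job,
      (∀ i j : Fin m, i ≠ j → Disjoint (G i) (G j)) ∧
      (Finset.univ.biUnion G = coverJobs n s ∪ dummyJobs s τ m χ ∪ M.image Job.mtch) ∧
      (∀ i : Fin m, ∑ job ∈ G i, jobSize α q m χ rk job
        = 6 * m ^ 3 * ∑ i ∈ Finset.Icc 1 (12 * q + τ), α ^ i) := by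
  have hrk_le : ∀ j ∈ Icc 1 s, rk j ≤ m := fun j hj =>
    ((hrk _ (hχrange j hj)).mapsTo ⟨hj, rfl⟩).2.trans (hclass _)
  refine ⟨fun k => (coverJobs n s ∪ dummyJobs s τ m χ ∪ M.image Job.mtch).filter
    (jobMachine q m s M χ · = k), fun k k' hne => disjoint_filter.2 fun _ _ h h' =>
      hne (Fin.ext (h.symm.trans h')), ?_, fun k =>
    sum_jobSize_on_machine hq hqm hT2form hM hχ hχrange hrk_le k.isLt⟩
  ext job
  simp only [mem_biUnion, mem_univ, mem_filter, true_and]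
  exact ⟨fun ⟨_, hjob, _⟩ => hjob,
    fun hjob => ⟨⟨_, jobMachine_lt hq hqm hT2form hM hχ hjob⟩, hjob, rfl⟩⟩

/-- if the structured 3DM' instance admits a proper matching
`M`, then the cover jobs, the dummy jobs and the match jobs of the matches of
`M` can be partitioned into `m` pairwise disjoint sets, each of total size
exactly `L = 6m³·∑_{i=1}^{12q+τ} α^i`. -/
theorem matching_to_schedule (n q m s τ α : ℕ)
    (hq : 1 ≤ q) (hm : 1 ≤ m) (hqm : n = q * m) (hα : 0 < α)
    (T2 : Finset (Finset Elem))
    (hT2form : ∀ e ∈ T2, ∃ i ∈ Finset.Icc 1 (3 * n), ∃ j ∈ Finset.Icc 1 s,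
      e = {Elem.w i, Elem.s j} ∨ e = {Elem.wbar i, Elem.s j})
    (hT2w : ∀ i ∈ Finset.Icc 1 (3 * n),
      ((T2.filter (fun e => Elem.w i ∈ e)).card = 1 ∧
        (T2.filter (fun e => Elem.wbar i ∈ e)).card = 0) ∨
      ((T2.filter (fun e => Elem.w i ∈ e)).card = 0 ∧
        (T2.filter (fun e => Elem.wbar i ∈ e)).card = 1))
    (hT2s : ∀ j ∈ Finset.Icc 1 s, (T2.filter (fun e => Elem.s j ∈ e)).card ≤ 3)
    (χ : ℕ → ℕ)
    (hχrange : ∀ j ∈ Finset.Icc 1 s, χ j ∈ Finset.Icc 1 τ)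
    (hχ : ∀ j ∈ Finset.Icc 1 s, ∀ j' ∈ Finset.Icc 1 s, j ≠ j' → ∀ k < m,
      (∃ e ∈ T2, Elem.s j ∈ e ∧ ∃ η ∈ e, inBlock q k η) →
      (∃ e ∈ T2, Elem.s j' ∈ e ∧ ∃ η ∈ e, inBlock q k η) → χ j ≠ χ j')
    (hclass : ∀ t, classCard s χ t ≤ m)
    (rk : ℕ → ℕ)
    (hrk : ∀ t ∈ Finset.Icc 1 τ,
      Set.BijOn rk {j | j ∈ Finset.Icc 1 s ∧ χ j = t} (Set.Icc 1 (classCard s χ t)))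
    (M : Finset (Finset Elem)) (hM : ProperMatching n s T2 M) :
    ∃ G : Fin m → Finset Job,
      (∀ i j : Fin m, i ≠ j → Disjoint (G i) (G j)) ∧
      (Finset.univ.biUnion G = coverJobs n s ∪ dummyJobs s τ m χ ∪ M.image Job.mtch) ∧
      (∀ i : Fin m, ∑ job ∈ G i, jobSize α q m χ rk job
        = 6 * m ^ 3 * ∑ i ∈ Finset.Icc 1 (12 * q + τ), α ^ i) :=
  matching_to_schedule_general n q m s τ α hq hqm T2 hT2form χ hχrange hχ hclass rk hrk M hM
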